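/- Let ε be a real symmetric positive definite 2s×2s matrix (the energy matrix of the quadratic Hamiltonian H = R ε Rᵀ). Then there exists a complex structure J_H on (ℝ^{2s}, Δ) commuting with εΔ, i.e., J_H² = −I, ΔJ_H = −J_HᵀΔ, ΔJ_H is positive semidefinite, and J_H(εΔ) = (εΔ)J_H. (Such a J_H is given by the orthogonal factor of the polar decomposition of −εΔ in the Euclidean space with inner product ε(z,z') = −zᵀΔεΔz'.) -/

import Mathlib

/-!
Write `ε = e²` with `e = √ε`. The congruent form `M = eΔe` is skew-adjoint and invertible, hence
normal, so it commutes with `|M| = √(MᵀM)`, and `MᵀM = -M²`. The polar factor `j = -M|M|⁻¹` of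
`-M` therefore satisfies `j² = M²|M|⁻² = -1`, `Mj = |M| ≥ 0`, and commutes with `M`. Conjugating
back, `J = e j e⁻¹` is a complex structure for `Δ = e⁻¹Me⁻¹` commuting with `εΔ = eMe⁻¹`.
-/

open Matrix

/-- The standard symplectic matrix `Δ` of a system of `s` modes: block-diagonal
with `s` copies of the 2×2 block `[[0,1],[-1,0]]`. -/
noncomputable def Sympl (s : ℕ) : Matrix (Fin 2 × Fin s) (Fin 2 × Fin s) ℝ :=
  Matrix.blockDiagonal (fun _ => !![0, 1; -1, 0])

/-- A real `2s × 2s` matrix `J` is a complex structure with respect to `Δ` if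
`J² = -I`, `ΔJ = -JᵀΔ`, and `ΔJ` is positive semidefinite. -/
def IsComplexStructure {s : ℕ} (J : Matrix (Fin 2 × Fin s) (Fin 2 × Fin s) ℝ) : Prop :=
  J * J = -1 ∧ Sympl s * J = -(Jᵀ * Sympl s) ∧ (Sympl s * J).PosSemidef

lemma Commute.units_conj {M : Type*} [Monoid M] {a b : M} (e : Mˣ) (h : Commute a b) :
    Commute (e * a * ↑e⁻¹) (e * b * ↑e⁻¹) := by
  simp only [Commute, SemiconjBy, mul_assoc, Units.inv_mul_cancel_left]
  rw [← mul_assoc a, h.eq, mul_assoc]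

section ComplexStructure

variable {A : Type*} [Ring A] [StarRing A]

lemma IsSelfAdjoint.units_inv {u : Aˣ} (hu : IsSelfAdjoint (u : A)) :
    IsSelfAdjoint (↑u⁻¹ : A) := by
  rw [isSelfAdjoint_iff, ← Units.coe_star_inv, show star u = u from Units.ext hu.star_eq]

variable [PartialOrder A]

/-- For real matrices under `MatrixOrder`, `star` is the transpose and `0 ≤` is positive
semidefiniteness, so `IsComplexStructure J` is `IsCompatibleComplexStructure (Sympl s) J`. -/
def IsCompatibleComplexStructure (ω j : A) : Prop :=
  j * j = -1 ∧ ω * j = -(star j * ω) ∧ 0 ≤ ω * j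

variable [StarOrderedRing A]

lemma IsCompatibleComplexStructure.units_conj {ω j : A} {e : Aˣ} (he : IsSelfAdjoint (e : A))
    (hj : IsCompatibleComplexStructure (e * ω * e) j) :
    IsCompatibleComplexStructure ω (e * j * ↑e⁻¹) := by
  obtain ⟨hjj, hskew, hpos⟩ := hj
  have hω : ω * (e * j * ↑e⁻¹) = ↑e⁻¹ * (e * ω * e * j) * ↑e⁻¹ := by
    simp only [mul_assoc, Units.inv_mul_cancel_left]
  refine ⟨?_, ?_, ?_⟩
  · simp [mul_assoc, ← mul_assoc j j, hjj]
  · rw [hω, hskew, star_mul, star_mul, he.star_eq, he.units_inv.star_eq]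
    simp only [mul_assoc, Units.mul_inv, mul_one, neg_mul, mul_neg]
  · rw [hω]
    simpa [he.units_inv.star_eq] using star_left_conjugate_nonneg hpos (↑e⁻¹ : A)

variable [TopologicalSpace A] [Algebra ℝ A] [ContinuousFunctionalCalculus ℝ A IsSelfAdjoint]
  [NonnegSpectrumClass ℝ A] [IsTopologicalRing A] [T2Space A]

lemma exists_isCompatibleComplexStructure_commute_of_star_eq_neg {a : A} (ha : IsUnit a)
    (ha_skew : star a = -a) :
    ∃ j : A, IsCompatibleComplexStructure a j ∧ Commute j a := by
  have hnormal : IsStarNormal a := ⟨by rw [ha_skew]; exact (Commute.refl a).neg_left⟩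
  obtain ⟨p, hp⟩ : IsUnit (CFC.abs a) :=
    (CFC.isUnit_sqrt_iff _ (star_mul_self_nonneg a)).mpr (ha.star.mul ha)
  have hpp : (p : A) * p = -(a * a) := by rw [hp, CFC.abs_mul_abs, ha_skew, neg_mul]
  have hpa : Commute (p : A) a := hp ▸ CFC.commute_abs_self a
  have hp_self : IsSelfAdjoint (p : A) := hp ▸ (CFC.abs_nonneg a).isSelfAdjoint
  have hap : a * (-(a * ↑p⁻¹)) = p := by
    rw [mul_neg, ← mul_assoc, ← neg_mul, ← hpp, Units.mul_inv_cancel_right]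
  refine ⟨-(a * ↑p⁻¹), ⟨?_, ?_, ?_⟩, ?_⟩
  · rw [neg_mul_neg, mul_assoc, ← mul_assoc (↑p⁻¹ : A), hpa.units_inv_left.eq, mul_assoc,
      ← mul_assoc a, ← neg_neg (a * a), ← hpp, neg_mul, mul_assoc, Units.mul_inv_cancel_left,
      Units.mul_inv]
  · have haa : a * a = -(p * p) := by rw [hpp, neg_neg]
    rw [hap, star_neg, star_mul, hp_self.units_inv.star_eq, ha_skew]
    simp only [mul_neg, neg_neg, mul_assoc, haa, Units.inv_mul_cancel_left]
  · exact hap ▸ hp ▸ CFC.abs_nonneg a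
  · exact ((Commute.refl a).mul_left hpa.units_inv_left).neg_left

theorem exists_isCompatibleComplexStructure_commute_mul {ω ε : A} (hω : IsUnit ω)
    (hω_skew : star ω = -ω) (hε : IsStrictlyPositive ε) :
    ∃ j : A, IsCompatibleComplexStructure ω j ∧ Commute j (ε * ω) := by
  obtain ⟨e, he⟩ := hε.isUnit_cfcSqrt
  have he_self : IsSelfAdjoint (e : A) := he ▸ (CFC.sqrt_nonneg ε).isSelfAdjoint
  have hee : (e : A) * e = ε := he ▸ CFC.sqrt_mul_sqrt_self ε hε.nonneg
  obtain ⟨j, hj, hcomm⟩ := exists_isCompatibleComplexStructure_commute_of_star_eq_neg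
    (e.isUnit.mul hω |>.mul e.isUnit) (by simp [mul_assoc, he_self.star_eq, hω_skew])
  refine ⟨e * j * ↑e⁻¹, hj.units_conj he_self, ?_⟩
  have hεω : ε * ω = e * (e * ω * e) * ↑e⁻¹ := by
    rw [← hee]
    simp only [mul_assoc, Units.mul_inv, mul_one]
  exact hεω ▸ hcomm.units_conj e

end ComplexStructure

lemma sympl_transpose (s : ℕ) : (Sympl s)ᵀ = -Sympl s := by
  rw [Sympl, blockDiagonal_transpose, ← blockDiagonal_neg]
  congr 1
  ext1
  simp [← Matrix.ext_iff, Fin.forall_fin_two]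

lemma sympl_mul_self (s : ℕ) : Sympl s * Sympl s = -1 := by
  rw [Sympl, ← blockDiagonal_mul, ← blockDiagonal_one, ← blockDiagonal_neg]
  congr 1
  ext1
  simp [← Matrix.ext_iff, Fin.forall_fin_two]

lemma isUnit_sympl (s : ℕ) : IsUnit (Sympl s) :=
  .of_mul_eq_one (-Sympl s) (by rw [mul_neg, sympl_mul_self, neg_neg])

open scoped MatrixOrder

/-- For every real symmetric positive definite energy matrix `ε`
there exists a complex structure `J_H` on `(ℝ^{2s}, Δ)` commuting with `εΔ`. -/
theorem exists_complexStructure_commuting_energy (s : ℕ)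
    (ε : Matrix (Fin 2 × Fin s) (Fin 2 × Fin s) ℝ) (hε : ε.PosDef) :
    ∃ J : Matrix (Fin 2 × Fin s) (Fin 2 × Fin s) ℝ, IsComplexStructure J ∧
      J * (ε * Sympl s) = (ε * Sympl s) * J := by
  have hΔ_skew : star (Sympl s) = -Sympl s := by
    rw [star_eq_conjTranspose, conjTranspose_eq_transpose_of_trivial, sympl_transpose]
  obtain ⟨J, ⟨hJJ, hJ_skew, hJ_pos⟩, hcomm⟩ :=
    exists_isCompatibleComplexStructure_commute_mul (isUnit_sympl s) hΔ_skew hε.isStrictlyPositive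
  rw [star_eq_conjTranspose, conjTranspose_eq_transpose_of_trivial] at hJ_skew
  exact ⟨J, ⟨hJJ, hJ_skew, hJ_pos.posSemidef⟩, hcomm⟩
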